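/- arXiv:1602.04055 — 3 statements merged into one kernel-verified Lean document; each statement's English description precedes it below -/
import Mathlib

section
/- Let m ≥ 1 and let {Ω_n}_{n≥1} be a sequence of m-dimensional real random vectors satisfying E(exp(⟨Ω_n, s⟩)) = exp(u(s)φ_n + v(s))·(1 + O(κ_n^{-1})) uniformly for s ∈ ℂ^m with ‖s‖ ≤ τ, where u, v are analytic on ‖s‖ ≤ τ and independent of n, φ_n → ∞ and κ_n → ∞. Then the mean vector satisfies E(Ω_n) = ∇u(0)·φ_n + ∇v(0) + O(κ_n^{-1}), where the O-term estimate holds entrywise. -/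
/-!
Restrict everything to the complex line `z ↦ z • eᵢ` through a coordinate vector. There the
moment generating function `g z = E exp (z Xᵢ)` is holomorphic on the disc of radius `τ` with
`g' 0 = E Xᵢ`, and `g = F (1 + O(1/κₙ))` with `F = exp (u φₙ + v)` nonvanishing. The Cauchy
estimate (in its Schwarz-lemma form) bounds `(g / F)' 0` by `O(1/(κₙ τ))`; since
`g' - g F'/F = F (g / F)'`, `g 0 = 1`, `|F 0| ≤ 2` and `F'/F 0 = ∂ᵢu(0) φₙ + ∂ᵢv(0)`, this is the
claimed estimate of the mean.
-/

open MeasureTheory Filter Finset Metric ProbabilityTheory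

theorem norm_deriv_sub_mul_logDeriv_le {g F : ℂ → ℂ} {c : ℂ} {r ε : ℝ} (hr : 0 < r)
    (hg : DifferentiableOn ℂ g (ball c r)) (hF : DifferentiableOn ℂ F (ball c r))
    (hF₀ : ∀ z ∈ ball c r, F z ≠ 0) (hgF : ∀ z ∈ ball c r, ‖g z - F z‖ ≤ ε * ‖F z‖) :
    ‖deriv g c - g c * logDeriv F c‖ ≤ 2 * ε * ‖F c‖ / r := by
  have hc : c ∈ ball c r := mem_ball_self hr
  have hdist_one : ∀ z ∈ ball c r, dist ((g / F) z) 1 ≤ ε := fun z hz => by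
    rw [dist_eq_norm, Pi.div_apply, div_sub_one (hF₀ z hz), norm_div,
      div_le_iff₀ (norm_pos_iff.mpr (hF₀ z hz))]
    exact hgF z hz
  have hmaps : Set.MapsTo (g / F) (ball c r) (closedBall ((g / F) c) (2 * ε)) := fun z hz => by
    rw [mem_closedBall, two_mul]
    exact (dist_triangle_right _ _ 1).trans (add_le_add (hdist_one z hz) (hdist_one c hc))
  have hderiv : ‖deriv (g / F) c‖ ≤ 2 * ε / r :=
    Complex.norm_deriv_le_div_of_mapsTo_ball (hg.div hF hF₀) hmaps hr
  have hgc := hg.differentiableAt (isOpen_ball.mem_nhds hc)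
  have hFc := hF.differentiableAt (isOpen_ball.mem_nhds hc)
  have hquot : deriv g c - g c * logDeriv F c = F c * deriv (g / F) c := by
    rw [deriv_div hgc hFc (hF₀ c hc), logDeriv_apply]
    field_simp [hF₀ c hc]
  calc ‖deriv g c - g c * logDeriv F c‖ = ‖F c‖ * ‖deriv (g / F) c‖ := by rw [hquot, norm_mul]
    _ ≤ ‖F c‖ * (2 * ε / r) := by gcongr
    _ = 2 * ε * ‖F c‖ / r := by ring

theorem sum_mul_smul_single_one {ι : Type*} [Fintype ι] [DecidableEq ι] (a : ι → ℂ) (i : ι)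
    (z : ℂ) :
    ∑ ℓ, a ℓ * (z • Pi.single i 1 : ι → ℂ) ℓ = z * a i := by
  simp [Pi.single_apply, mul_comm]

theorem DifferentiableAt.hasDerivAt_comp_smul_const {E : Type*} [NormedAddCommGroup E]
    [NormedSpace ℂ E] {u : E → ℂ} {e : E} {z : ℂ} (hu : DifferentiableAt ℂ u (z • e)) :
    HasDerivAt (fun w : ℂ => u (w • e)) (fderiv ℂ u (z • e) e) z := by
  have h := hu.hasFDerivAt.comp_hasDerivAt z ((hasDerivAt_id z).smul_const e)
  rwa [one_smul] at h

namespace ProbabilityTheory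

variable {Ω : Type*} [MeasurableSpace Ω] {μ : Measure Ω} {X : Ω → ℝ} {r : ℝ}

theorem re_mem_interior_integrableExpSet
    (hX : ∀ z ∈ ball (0 : ℂ) r, Integrable (fun ω => Complex.exp (z * X ω)) μ) {z : ℂ}
    (hz : z ∈ ball 0 r) : z.re ∈ interior (integrableExpSet X μ) := by
  have hIoo : Set.Ioo (-r) r ⊆ integrableExpSet X μ := fun t ht => by
    simpa [integrableExpSet, Complex.norm_exp] using (hX t (by simpa [abs_lt] using ht)).norm
  exact interior_maximal hIoo isOpen_Ioo
    (abs_lt.mp ((Complex.abs_re_le_norm z).trans_lt (mem_ball_zero_iff.mp hz)))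

theorem hasDerivAt_complexMGF_zero (h : 0 ∈ interior (integrableExpSet X μ)) :
    HasDerivAt (complexMGF X μ) ((μ[X] : ℝ) : ℂ) 0 := by
  rw [← integral_complex_ofReal]
  simpa using hasDerivAt_complexMGF (z := 0) (by simpa using h)

theorem norm_integral_sub_deriv_le_of_complexMGF [IsProbabilityMeasure μ] {w : ℂ → ℂ} {ε : ℝ}
    (hr : 0 < r) (hε : ε ≤ 1 / 2) (hw : DifferentiableOn ℂ w (ball 0 r))
    (hX : ∀ z ∈ ball (0 : ℂ) r, Integrable (fun ω => Complex.exp (z * X ω)) μ)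
    (hmgf : ∀ z ∈ ball (0 : ℂ) r,
      ‖complexMGF X μ z - Complex.exp (w z)‖ ≤ ε * ‖Complex.exp (w z)‖) :
    ‖((μ[X] : ℝ) : ℂ) - deriv w 0‖ ≤ 4 * ε / r := by
  have h0 : (0 : ℂ) ∈ ball 0 r := mem_ball_self hr
  have hmgf_zero : complexMGF X μ 0 = 1 := by simp [complexMGF]
  have hmean : deriv (complexMGF X μ) 0 = ((μ[X] : ℝ) : ℂ) :=
    (hasDerivAt_complexMGF_zero (by simpa using re_mem_interior_integrableExpSet hX h0)).deriv
  have hlogDeriv : logDeriv (fun z => Complex.exp (w z)) 0 = deriv w 0 := by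
    rw [logDeriv_apply, deriv_cexp (hw.differentiableAt (isOpen_ball.mem_nhds h0))]
    field_simp [Complex.exp_ne_zero]
  have hexp_zero : ‖Complex.exp (w 0)‖ ≤ 2 := by
    have h := hmgf 0 h0
    rw [hmgf_zero, norm_sub_rev] at h
    have := norm_sub_norm_le (Complex.exp (w 0)) 1
    rw [norm_one] at this
    nlinarith [norm_nonneg (Complex.exp (w 0))]
  have hε₀ : 0 ≤ ε := nonneg_of_mul_nonneg_left ((norm_nonneg _).trans (hmgf 0 h0))
    (norm_pos_iff.mpr (Complex.exp_ne_zero _))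
  have key := norm_deriv_sub_mul_logDeriv_le hr
    (differentiableOn_complexMGF.mono fun z hz => re_mem_interior_integrableExpSet hX hz)
    hw.cexp (fun _ _ => Complex.exp_ne_zero _) hmgf
  rw [hmean, hmgf_zero, one_mul, hlogDeriv] at key
  calc ‖((μ[X] : ℝ) : ℂ) - deriv w 0‖ ≤ 2 * ε * ‖Complex.exp (w 0)‖ / r := key
    _ ≤ 2 * ε * 2 / r := by gcongr
    _ = 4 * ε / r := by ring

theorem integrable_eval_and_norm_integral_eval_sub_le
    [IsProbabilityMeasure μ] {ι : Type*} [Fintype ι] [DecidableEq ι] {Y : Ω → ι → ℝ}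
    {u v : (ι → ℂ) → ℂ} {a : ℂ} {ε : ℝ}
    (hr : 0 < r) (hε : ε ≤ 1 / 2)
    (hu : DifferentiableOn ℂ u (ball 0 r)) (hv : DifferentiableOn ℂ v (ball 0 r))
    (hY : ∀ s ∈ ball (0 : ι → ℂ) r,
      Integrable (fun ω => Complex.exp (∑ ℓ, (Y ω ℓ : ℂ) * s ℓ)) μ ∧
      ‖(∫ ω, Complex.exp (∑ ℓ, (Y ω ℓ : ℂ) * s ℓ) ∂μ) - Complex.exp (u s * a + v s)‖
        ≤ ε * ‖Complex.exp (u s * a + v s)‖)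
    (i : ι) :
    Integrable (fun ω => Y ω i) μ ∧
      ‖((∫ ω, Y ω i ∂μ : ℝ) : ℂ)
          - (fderiv ℂ u 0 (Pi.single i 1) * a + fderiv ℂ v 0 (Pi.single i 1))‖ ≤ 4 * ε / r := by
  set e : ι → ℂ := Pi.single i 1
  have hline : ∀ z ∈ ball (0 : ℂ) r, z • e ∈ ball 0 r := fun z hz => by
    simpa [e, norm_smul, Pi.norm_single] using hz
  have hslice : ∀ z ∈ ball (0 : ℂ) r, Integrable (fun ω => Complex.exp (z * Y ω i)) μ ∧
      ‖complexMGF (fun ω => Y ω i) μ z - Complex.exp (u (z • e) * a + v (z • e))‖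
        ≤ ε * ‖Complex.exp (u (z • e) * a + v (z • e))‖ := fun z hz => by
    simpa only [e, complexMGF, sum_mul_smul_single_one] using hY _ (hline z hz)
  have hderiv : ∀ z ∈ ball (0 : ℂ) r, HasDerivAt (fun w : ℂ => u (w • e) * a + v (w • e))
      (fderiv ℂ u (z • e) e * a + fderiv ℂ v (z • e) e) z := fun z hz =>
    ((hu.differentiableAt (isOpen_ball.mem_nhds (hline z hz))).hasDerivAt_comp_smul_const.mul_const
      a).add (hv.differentiableAt (isOpen_ball.mem_nhds (hline z hz))).hasDerivAt_comp_smul_const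
  have h0 : (0 : ℂ) ∈ ball 0 r := mem_ball_self hr
  refine ⟨integrable_of_mem_interior_integrableExpSet (by
    simpa using re_mem_interior_integrableExpSet (fun z hz => (hslice z hz).1) h0), ?_⟩
  have h := norm_integral_sub_deriv_le_of_complexMGF hr hε
    (fun z hz => (hderiv z hz).differentiableAt.differentiableWithinAt)
    (fun z hz => (hslice z hz).1) (fun z hz => (hslice z hz).2)
  rwa [(hderiv 0 h0).deriv, zero_smul] at h

end ProbabilityTheory

theorem quasi_power_mean_general
    {Ω : Type*} [MeasurableSpace Ω] (μ : Measure Ω) [IsProbabilityMeasure μ]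
    (m : ℕ)
    (X : ℕ → Ω → Fin m → ℝ)
    (τ : ℝ) (hτ : 0 < τ)
    (u v : (Fin m → ℂ) → ℂ)
    (hu : AnalyticOnNhd ℂ u (Metric.closedBall 0 τ))
    (hv : AnalyticOnNhd ℂ v (Metric.closedBall 0 τ))
    (φ κ : ℕ → ℝ)
    (hκ : Tendsto κ atTop atTop)
    (hmgf : ∃ C : ℝ, 0 < C ∧ ∀ᶠ n in atTop, ∀ s : Fin m → ℂ, ‖s‖ ≤ τ →
      Integrable (fun ω => Complex.exp (∑ ℓ, (X n ω ℓ : ℂ) * s ℓ)) μ ∧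
      ‖(∫ ω, Complex.exp (∑ ℓ, (X n ω ℓ : ℂ) * s ℓ) ∂μ)
          - Complex.exp (u s * (φ n : ℂ) + v s)‖
        ≤ C * ‖Complex.exp (u s * (φ n : ℂ) + v s)‖ / κ n)
    -- `gu` and `gv` are the gradients of `u` and `v` at the origin:
    (gu gv : Fin m → ℝ)
    (hgu : ∀ i, fderiv ℂ u 0 (Pi.single i 1) = (gu i : ℂ))
    (hgv : ∀ i, fderiv ℂ v 0 (Pi.single i 1) = (gv i : ℂ)) :
    ∃ C : ℝ, ∀ᶠ n in atTop,
      (∀ i, Integrable (fun ω => X n ω i) μ) ∧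
      ∀ i, |(∫ ω, X n ω i ∂μ) - (gu i * φ n + gv i)| ≤ C / κ n := by
  obtain ⟨C, hC, hev⟩ := hmgf
  refine ⟨4 * C / τ, ?_⟩
  filter_upwards [hev, hκ.eventually_ge_atTop (2 * C)] with n hn hκn
  have hε : C / κ n ≤ 1 / 2 := by rw [div_le_iff₀ (by linarith)]; linarith
  have hbound := integrable_eval_and_norm_integral_eval_sub_le hτ hε
    (hu.differentiableOn.mono ball_subset_closedBall)
    (hv.differentiableOn.mono ball_subset_closedBall)
    (fun s hs => (hn s (mem_ball_zero_iff.mp hs).le).imp_right (·.trans_eq (by ring)))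
  refine ⟨fun i => (hbound i).1, fun i => ?_⟩
  have h := (hbound i).2
  rw [hgu, hgv] at h
  rw [← Real.norm_eq_abs, ← Complex.norm_real]
  push_cast
  exact h.trans_eq (by ring)

/-- **Mean under the quasi-power assumption** (part of Proposition 2 of Heuberger–Kropf).
If the moment generating functions satisfy the quasi-power expression
`exp(u(s)·φₙ + v(s))·(1 + O(κₙ⁻¹))` uniformly on `‖s‖ ≤ τ`, then the mean vector
satisfies `E(Ωₙ) = ∇u(0)·φₙ + ∇v(0) + O(κₙ⁻¹)` entrywise. -/
theorem quasi_power_mean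
    {Ω : Type*} [MeasurableSpace Ω] (μ : Measure Ω) [IsProbabilityMeasure μ]
    (m : ℕ) (hm : 1 ≤ m)
    (X : ℕ → Ω → Fin m → ℝ)
    (hX : ∀ n, Measurable (X n))
    (τ : ℝ) (hτ : 0 < τ)
    (u v : (Fin m → ℂ) → ℂ)
    (hu : AnalyticOnNhd ℂ u (Metric.closedBall 0 τ))
    (hv : AnalyticOnNhd ℂ v (Metric.closedBall 0 τ))
    (φ κ : ℕ → ℝ)
    (hφ : Tendsto φ atTop atTop)
    (hκ : Tendsto κ atTop atTop)
    (hmgf : ∃ C : ℝ, 0 < C ∧ ∀ᶠ n in atTop, ∀ s : Fin m → ℂ, ‖s‖ ≤ τ →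
      Integrable (fun ω => Complex.exp (∑ ℓ, (X n ω ℓ : ℂ) * s ℓ)) μ ∧
      ‖(∫ ω, Complex.exp (∑ ℓ, (X n ω ℓ : ℂ) * s ℓ) ∂μ)
          - Complex.exp (u s * (φ n : ℂ) + v s)‖
        ≤ C * ‖Complex.exp (u s * (φ n : ℂ) + v s)‖ / κ n)
    -- `gu` and `gv` are the gradients of `u` and `v` at the origin:
    (gu gv : Fin m → ℝ)
    (hgu : ∀ i, fderiv ℂ u 0 (Pi.single i 1) = (gu i : ℂ))
    (hgv : ∀ i, fderiv ℂ v 0 (Pi.single i 1) = (gv i : ℂ)) :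
    ∃ C : ℝ, ∀ᶠ n in atTop,
      (∀ i, Integrable (fun ω => X n ω i) μ) ∧
      ∀ i, |(∫ ω, X n ω i ∂μ) - (gu i * φ n + gv i)| ≤ C / κ n :=
  quasi_power_mean_general μ m X τ hτ u v hu hv φ κ hκ hmgf gu gv hgu hgv
end

section
/- Let m ≥ 1 and let {Ω_n}_{n≥1} be a sequence of m-dimensional real random vectors satisfying E(exp(⟨Ω_n, s⟩)) = exp(u(s)φ_n + v(s))·(1 + O(κ_n^{-1})) uniformly for s ∈ ℂ^m with ‖s‖ ≤ τ, where u, v are analytic on ‖s‖ ≤ τ and independent of n, φ_n → ∞ and κ_n → ∞. Then the variance–covariance matrix satisfies Cov(Ω_n) = H_u(0)·φ_n + H_v(0) + O(κ_n^{-1}), where the O-term estimate holds entrywise. -/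
/-!
Fix a real direction `w`. The moment generating function of `⟨w, Ωₙ⟩` is `z ↦ Mₙ(z w)`, so the
hypothesis writes it as `exp (g z) * H z` with `g z = f (z w)`, `f = u φₙ + v`, and
`‖H - 1‖ ≤ C / κₙ` on a disc. Since `Mₙ(0) = 1`, differentiating twice at `0` gives
`Var ⟨w, Ωₙ⟩ = g''(0) + a H''(0) - (a H'(0))²` with `a = exp (g 0) = 1 / H 0`, and Cauchy's
estimates make `H'(0)` and `H''(0)` of order `κₙ⁻¹`. Polarization over `w = eᵢ, eⱼ, eᵢ + eⱼ`,
together with the symmetry of the Hessian of `f`, turns these variance estimates into the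
covariance estimate.
-/

open MeasureTheory Filter Topology Metric ProbabilityTheory

theorem iteratedDeriv_two_comp_smul {𝕜 E F : Type*} [NontriviallyNormedField 𝕜]
    [NormedAddCommGroup E] [NormedSpace 𝕜 E] [NormedAddCommGroup F] [NormedSpace 𝕜 F]
    {f : E → F} (w : E) (hf : ContDiffAt 𝕜 2 f 0) :
    iteratedDeriv 2 (fun t : 𝕜 => f (t • w)) 0 = fderiv 𝕜 (fderiv 𝕜 f) 0 w w := by
  have hline : ∀ t : 𝕜, HasDerivAt (fun t : 𝕜 => t • w) w t := fun t => by
    simpa using (hasDerivAt_id t).smul_const w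
  have hnear : ∀ᶠ t in 𝓝 (0 : 𝕜), DifferentiableAt 𝕜 f (t • w) := by
    have h : ∀ᶠ x in 𝓝 (0 : E), DifferentiableAt 𝕜 f x :=
      (hf.eventually (by simp)).mono fun x hx => hx.differentiableAt (by simp)
    exact (hline 0).continuousAt.tendsto.eventually (by simpa using h)
  have hderiv : deriv (fun t : 𝕜 => f (t • w)) =ᶠ[𝓝 0] fun t => fderiv 𝕜 f (t • w) w :=
    hnear.mono fun t ht => (ht.hasFDerivAt.comp_hasDerivAt t (hline t)).deriv
  have hfd : DifferentiableAt 𝕜 (fderiv 𝕜 f) ((0 : 𝕜) • w) := by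
    simpa using (hf.fderiv_right (m := 1) (by norm_num)).differentiableAt (by norm_num)
  rw [iteratedDeriv_succ, iteratedDeriv_one, hderiv.deriv_eq]
  have h := ((ContinuousLinearMap.apply 𝕜 F w).hasFDerivAt.comp _
    hfd.hasFDerivAt).comp_hasDerivAt (0 : 𝕜) (hline 0)
  simpa [Function.comp_def] using h.deriv

theorem hasDerivAt_cexp_mul {g H : ℂ → ℂ} {x : ℂ} (hg : DifferentiableAt ℂ g x)
    (hH : DifferentiableAt ℂ H x) :
    HasDerivAt (fun z => Complex.exp (g z) * H z)
      (Complex.exp (g x) * (deriv g x * H x + deriv H x)) x :=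
  (hg.hasDerivAt.cexp.mul hH.hasDerivAt).congr_deriv (by ring)

theorem iteratedDeriv_two_cexp_mul {g H : ℂ → ℂ} {x : ℂ} (hg : AnalyticAt ℂ g x)
    (hH : AnalyticAt ℂ H x) :
    iteratedDeriv 2 (fun z => Complex.exp (g z) * H z) x = Complex.exp (g x) *
      ((iteratedDeriv 2 g x + deriv g x ^ 2) * H x + 2 * deriv g x * deriv H x
        + iteratedDeriv 2 H x) := by
  have hderiv : deriv (fun z => Complex.exp (g z) * H z)
      =ᶠ[𝓝 x] fun z => Complex.exp (g z) * (deriv g z * H z + deriv H z) :=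
    (hg.eventually_analyticAt.and hH.eventually_analyticAt).mono fun z hz =>
      (hasDerivAt_cexp_mul hz.1.differentiableAt hz.2.differentiableAt).deriv
  rw [iteratedDeriv_succ, iteratedDeriv_one, hderiv.deriv_eq, iteratedDeriv_succ,
    iteratedDeriv_one, iteratedDeriv_succ, iteratedDeriv_one]
  have hg' := hg.deriv.differentiableAt.hasDerivAt
  have hH' := hH.deriv.differentiableAt.hasDerivAt
  exact (hg.differentiableAt.hasDerivAt.cexp.mul
    ((hg'.mul hH.differentiableAt.hasDerivAt).add hH')).deriv.trans
      (by simp only [Pi.add_apply, Pi.mul_apply]; ring)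

theorem norm_iteratedDeriv_le_of_forall_mem_ball_norm_sub_le {H : ℂ → ℂ} {c a : ℂ} {ρ ε : ℝ}
    {n : ℕ} (hn : 0 < n) (hρ : 0 < ρ) (hH : DifferentiableOn ℂ H (ball c ρ))
    (hε : ∀ z ∈ ball c ρ, ‖H z - a‖ ≤ ε) :
    ‖iteratedDeriv n H c‖ ≤ n.factorial * ε / (ρ / 2) ^ n := by
  have hsub : closedBall c (ρ / 2) ⊆ ball c ρ := closedBall_subset_ball (by linarith)
  rw [← iteratedDeriv_const_add hn (-a)]
  refine Complex.norm_iteratedDeriv_le_of_forall_mem_sphere_norm_le n (by positivity)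
    ((hH.const_add (-a)).diffContOnCl_ball hsub) fun z hz => ?_
  simpa [neg_add_eq_sub] using hε z (hsub (sphere_subset_closedBall hz))

theorem norm_le_two_of_mul_eq_one {a b : ℂ} (hab : a * b = 1) (hb : ‖b - 1‖ ≤ 1 / 2) :
    ‖a‖ ≤ 2 := by
  have hb' : 1 / 2 ≤ ‖b‖ := by
    have := norm_sub_norm_le (1 : ℂ) (1 - b)
    rw [sub_sub_cancel, norm_one, norm_sub_rev] at this
    linarith
  have : ‖a‖ * ‖b‖ = 1 := by rw [← norm_mul, hab, norm_one]
  nlinarith [norm_nonneg a]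

section MGF

variable {Ω : Type*} [MeasurableSpace Ω] {μ : Measure Ω} {Z : Ω → ℝ}

theorem re_mem_interior_integrableExpSet_of_norm_complexMGF_sub_le (hZ : AEMeasurable Z μ)
    {g : ℂ → ℂ} {ρ ε : ℝ} (hε : ε < 1)
    (h : ∀ z ∈ ball (0 : ℂ) ρ, ‖complexMGF Z μ z - Complex.exp (g z)‖ ≤ ε * ‖Complex.exp (g z)‖)
    {z : ℂ} (hz : z ∈ ball 0 ρ) : z.re ∈ interior (integrableExpSet Z μ) := by
  have hIoo : Set.Ioo (-ρ) ρ ⊆ integrableExpSet Z μ := by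
    -- off `integrableExpSet` the junk value `complexMGF Z μ t = 0` violates the relative bound
    intro t ht
    by_contra hnot
    have hzero : complexMGF Z μ t = 0 :=
      complexMGF_undef hZ (by simpa [integrableExpSet] using hnot)
    have hbound := h t (by simpa [abs_lt] using ht)
    rw [hzero, zero_sub, norm_neg] at hbound
    have hpos : 0 < ‖Complex.exp (g t)‖ := norm_pos_iff.mpr (Complex.exp_ne_zero _)
    nlinarith
  refine interior_mono hIoo ?_
  rw [isOpen_Ioo.interior_eq, Set.mem_Ioo, ← abs_lt]
  exact (Complex.abs_re_le_norm z).trans_lt (mem_ball_zero_iff.mp hz)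

variable [IsProbabilityMeasure μ]

theorem variance_sub_iteratedDeriv_eq_of_complexMGF_eq_cexp_mul
    (hZ : 0 ∈ interior (integrableExpSet Z μ)) {g H : ℂ → ℂ} (hg : AnalyticAt ℂ g 0)
    (hH : AnalyticAt ℂ H 0) (hM : complexMGF Z μ = fun z => Complex.exp (g z) * H z) :
    Complex.exp (g 0) * H 0 = 1 ∧
      (Var[Z; μ] : ℂ) - iteratedDeriv 2 g 0
        = Complex.exp (g 0) * iteratedDeriv 2 H 0 - (Complex.exp (g 0) * deriv H 0) ^ 2 := by
  have hZ0 : (0 : ℂ).re ∈ interior (integrableExpSet Z μ) := hZ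
  have hM0 : Complex.exp (g 0) * H 0 = 1 := by
    simpa [complexMGF] using (congrFun hM 0).symm
  have hM1 : deriv (complexMGF Z μ) 0 = ((μ[Z] : ℝ) : ℂ) := by
    rw [← iteratedDeriv_one, iteratedDeriv_complexMGF hZ0]
    simpa using integral_complex_ofReal
  have hM2 : iteratedDeriv 2 (complexMGF Z μ) 0 = ((μ[Z ^ 2] : ℝ) : ℂ) := by
    rw [iteratedDeriv_complexMGF hZ0]
    simp only [zero_mul, Complex.exp_zero, mul_one, Pi.pow_apply]
    exact_mod_cast integral_complex_ofReal
  rw [hM] at hM1 hM2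
  rw [(hasDerivAt_cexp_mul hg.differentiableAt hH.differentiableAt).deriv] at hM1
  rw [iteratedDeriv_two_cexp_mul hg hH] at hM2
  refine ⟨hM0, ?_⟩
  rw [variance_eq_sub (memLp_of_mem_interior_integrableExpSet hZ 2)]
  push_cast
  rw [← hM1, ← hM2]
  linear_combination (iteratedDeriv 2 g 0 - deriv g 0 ^ 2 * Complex.exp (g 0) * H 0
    - 2 * Complex.exp (g 0) * deriv g 0 * deriv H 0) * hM0

theorem norm_variance_sub_iteratedDeriv_le (hZ : AEMeasurable Z μ) {g : ℂ → ℂ} {ρ ε : ℝ}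
    (hρ : 0 < ρ) (hε : ε ≤ 1 / 2) (hg : DifferentiableOn ℂ g (ball 0 ρ))
    (h : ∀ z ∈ ball (0 : ℂ) ρ, ‖complexMGF Z μ z - Complex.exp (g z)‖ ≤ ε * ‖Complex.exp (g z)‖) :
    MemLp Z 2 μ ∧ ‖(Var[Z; μ] : ℂ) - iteratedDeriv 2 g 0‖ ≤ 24 * ε / ρ ^ 2 := by
  have hre := fun z (hz : z ∈ ball (0 : ℂ) ρ) =>
    re_mem_interior_integrableExpSet_of_norm_complexMGF_sub_le hZ (by linarith) h hz
  have h0 : (0 : ℂ) ∈ ball 0 ρ := mem_ball_self hρ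
  have hZ0 : 0 ∈ interior (integrableExpSet Z μ) := by simpa using hre 0 h0
  refine ⟨memLp_of_mem_interior_integrableExpSet hZ0 2, ?_⟩
  have hε0 : 0 ≤ ε := by
    have hpos : 0 < ‖Complex.exp (g 0)‖ := norm_pos_iff.mpr (Complex.exp_ne_zero _)
    nlinarith [h 0 h0, norm_nonneg (complexMGF Z μ 0 - Complex.exp (g 0))]
  set H : ℂ → ℂ := fun z => complexMGF Z μ z * Complex.exp (-g z) with hH_def
  have hMH : complexMGF Z μ = fun z => Complex.exp (g z) * H z := by
    funext z
    rw [hH_def, mul_left_comm, ← Complex.exp_add, add_neg_cancel, Complex.exp_zero, mul_one]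
  have hgan : AnalyticOnNhd ℂ g (ball 0 ρ) := hg.analyticOnNhd isOpen_ball
  have hHan : AnalyticOnNhd ℂ H (ball 0 ρ) := fun z hz =>
    (analyticAt_complexMGF (hre z hz)).mul (hgan z hz).neg.cexp
  have hH1 : ∀ z ∈ ball (0 : ℂ) ρ, ‖H z - 1‖ ≤ ε := by
    intro z hz
    have hpos : 0 < ‖Complex.exp (g z)‖ := norm_pos_iff.mpr (Complex.exp_ne_zero _)
    have hbound := h z hz
    rw [hMH, ← mul_sub_one, norm_mul] at hbound
    nlinarith
  have hH' := norm_iteratedDeriv_le_of_forall_mem_ball_norm_sub_le one_pos hρ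
    hHan.differentiableOn hH1
  have hH'' := norm_iteratedDeriv_le_of_forall_mem_ball_norm_sub_le two_pos hρ
    hHan.differentiableOn hH1
  rw [iteratedDeriv_one] at hH'
  obtain ⟨hgH, hvar⟩ :=
    variance_sub_iteratedDeriv_eq_of_complexMGF_eq_cexp_mul hZ0 (hgan 0 h0) (hHan 0 h0) hMH
  set a := Complex.exp (g 0)
  have ha : ‖a‖ ≤ 2 := norm_le_two_of_mul_eq_one hgH ((hH1 0 h0).trans hε)
  rw [hvar]
  calc ‖a * iteratedDeriv 2 H 0 - (a * deriv H 0) ^ 2‖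
      ≤ ‖a‖ * ‖iteratedDeriv 2 H 0‖ + (‖a‖ * ‖deriv H 0‖) ^ 2 := by
        refine (norm_sub_le _ _).trans ?_
        rw [norm_pow, norm_mul, norm_mul]
    _ ≤ 2 * (Nat.factorial 2 * ε / (ρ / 2) ^ 2)
          + (2 * (Nat.factorial 1 * ε / (ρ / 2) ^ 1)) ^ 2 := by
        gcongr
    _ = (16 * ε + 16 * ε ^ 2) / ρ ^ 2 := by
        simp only [Nat.factorial]
        field_simp
        ring
    _ ≤ 24 * ε / ρ ^ 2 := by
        gcongr
        nlinarith

end MGF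

theorem norm_ofReal_comp_le {ι : Type*} [Fintype ι] (w : ι → ℝ) :
    ‖fun ℓ => (w ℓ : ℂ)‖ ≤ ‖w‖ :=
  (pi_norm_le_iff_of_nonneg (norm_nonneg w)).mpr fun ℓ => by
    simpa [Complex.norm_real] using norm_le_pi_norm w ℓ

theorem fderiv_apply_fderiv {𝕜 E F : Type*} [NontriviallyNormedField 𝕜]
    [NormedAddCommGroup E] [NormedSpace 𝕜 E] [NormedAddCommGroup F] [NormedSpace 𝕜 F]
    {f : E → F} {x : E} (hf : ContDiffAt 𝕜 2 f x) (v w : E) :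
    fderiv 𝕜 (fun z => fderiv 𝕜 f z w) x v = fderiv 𝕜 (fderiv 𝕜 f) x v w := by
  rw [fderiv_clm_apply ((hf.fderiv_right (m := 1) (by norm_num)).differentiableAt (by norm_num))
    (differentiableAt_const w)]
  simp

theorem fderiv_fderiv_mul_const_add {𝕜 E : Type*} [NontriviallyNormedField 𝕜]
    [NormedAddCommGroup E] [NormedSpace 𝕜 E] {u v : E → 𝕜} {x : E} (c : 𝕜)
    (hu : ContDiffAt 𝕜 2 u x) (hv : ContDiffAt 𝕜 2 v x) :
    fderiv 𝕜 (fderiv 𝕜 fun s => u s * c + v s) x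
      = c • fderiv 𝕜 (fderiv 𝕜 u) x + fderiv 𝕜 (fderiv 𝕜 v) x := by
  have hnear : fderiv 𝕜 (fun s => u s * c + v s) =ᶠ[𝓝 x] c • fderiv 𝕜 u + fderiv 𝕜 v := by
    filter_upwards [hu.eventually (by simp), hv.eventually (by simp)] with s hus hvs
    have hud := hus.differentiableAt (by simp)
    rw [fderiv_fun_add (hud.mul_const c) (hvs.differentiableAt (by simp)),
      fderiv_mul_const hud]
    rfl
  have hu' := (hu.fderiv_right (m := 1) (by norm_num)).differentiableAt (by norm_num)
  have hv' := (hv.fderiv_right (m := 1) (by norm_num)).differentiableAt (by norm_num)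
  rw [hnear.fderiv_eq, fderiv_add (hu'.const_smul c) hv', fderiv_const_smul hu']

theorem ofReal_comp_single {ι : Type*} [DecidableEq ι] (i : ι) :
    (fun ℓ => ((Pi.single i (1 : ℝ) : ι → ℝ) ℓ : ℂ)) = Pi.single i 1 := by
  funext ℓ
  rcases eq_or_ne ℓ i with rfl | hℓ <;> simp [*]

theorem ofReal_covariance_sub_eq_polarization {Ω E : Type*} [MeasurableSpace Ω]
    {μ : Measure Ω} [IsFiniteMeasure μ] [NormedAddCommGroup E] [NormedSpace ℂ E]
    {X₁ X₂ : Ω → ℝ} (h₁ : MemLp X₁ 2 μ) (h₂ : MemLp X₂ 2 μ) (B : E →L[ℂ] E →L[ℂ] ℂ)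
    {a b : E} (hB : B a b = B b a) :
    (cov[X₁, X₂; μ] : ℂ) - B a b
      = ((Var[fun ω => X₁ ω + X₂ ω; μ] - B (a + b) (a + b)) - (Var[X₁; μ] - B a a)
          - (Var[X₂; μ] - B b b)) / 2 := by
  simp only [variance_fun_add h₁ h₂, map_add, FunLike.coe_add, Pi.add_apply, ← hB]
  push_cast
  ring

section Multivariate

variable {Ω ι : Type*} [MeasurableSpace Ω] {μ : Measure Ω} [Fintype ι] {Y : Ω → ι → ℝ}

noncomputable def mvComplexMGF (Y : Ω → ι → ℝ) (μ : Measure Ω) (s : ι → ℂ) : ℂ :=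
  ∫ ω, Complex.exp (∑ ℓ, (Y ω ℓ : ℂ) * s ℓ) ∂μ

theorem complexMGF_dotProduct (w : ι → ℝ) (z : ℂ) :
    complexMGF (fun ω => w ⬝ᵥ Y ω) μ z = mvComplexMGF Y μ (z • fun ℓ => (w ℓ : ℂ)) := by
  simp only [complexMGF, mvComplexMGF, dotProduct, Complex.ofReal_sum, Complex.ofReal_mul,
    Finset.mul_sum, Pi.smul_apply, smul_eq_mul]
  congr 1; funext ω; congr 1; refine Finset.sum_congr rfl fun ℓ _ => by ring

variable [IsProbabilityMeasure μ]

theorem norm_variance_dotProduct_sub_le (hY : Measurable Y) {f : (ι → ℂ) → ℂ} {τ ε r : ℝ}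
    (hτ : 0 < τ) (hr : 0 < r) (hε : ε ≤ 1 / 2) (hf : AnalyticOnNhd ℂ f (closedBall 0 τ))
    (h : ∀ s : ι → ℂ, ‖s‖ ≤ τ →
      ‖mvComplexMGF Y μ s - Complex.exp (f s)‖ ≤ ε * ‖Complex.exp (f s)‖)
    {w : ι → ℝ} (hw : ‖w‖ ≤ r) :
    MemLp (fun ω => w ⬝ᵥ Y ω) 2 μ ∧
      ‖(Var[fun ω => w ⬝ᵥ Y ω; μ] : ℂ)
        - fderiv ℂ (fderiv ℂ f) 0 (fun ℓ => (w ℓ : ℂ)) (fun ℓ => (w ℓ : ℂ))‖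
        ≤ 24 * ε * r ^ 2 / τ ^ 2 := by
  set w' : ι → ℂ := fun ℓ => (w ℓ : ℂ)
  have hline : ∀ z ∈ ball (0 : ℂ) (τ / r), z • w' ∈ closedBall 0 τ := by
    intro z hz
    rw [mem_closedBall_zero_iff, norm_smul]
    rw [mem_ball_zero_iff, lt_div_iff₀ hr] at hz
    nlinarith [norm_ofReal_comp_le w, norm_nonneg z]
  have hg : DifferentiableOn ℂ (fun z : ℂ => f (z • w')) (ball 0 (τ / r)) := fun z hz =>
    ((hf _ (hline z hz)).differentiableAt.comp z
      ((differentiableAt_id.smul_const w'))).differentiableWithinAt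
  have hZ : Measurable fun ω => w ⬝ᵥ Y ω := by
    simp only [dotProduct]
    fun_prop
  obtain ⟨hL2, hbound⟩ := norm_variance_sub_iteratedDeriv_le hZ.aemeasurable (div_pos hτ hr) hε hg
    fun z hz => by
      rw [complexMGF_dotProduct]
      exact h _ (mem_closedBall_zero_iff.mp (hline z hz))
  refine ⟨hL2, ?_⟩
  rw [iteratedDeriv_two_comp_smul w' (hf 0 (mem_closedBall_self hτ.le)).contDiffAt] at hbound
  convert hbound using 1
  field_simp

theorem norm_covariance_sub_fderiv_fderiv_le [DecidableEq ι] (hY : Measurable Y)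
    {f : (ι → ℂ) → ℂ} {τ ε : ℝ} (hτ : 0 < τ) (hε : ε ≤ 1 / 2)
    (hf : AnalyticOnNhd ℂ f (closedBall 0 τ))
    (h : ∀ s : ι → ℂ, ‖s‖ ≤ τ →
      ‖mvComplexMGF Y μ s - Complex.exp (f s)‖ ≤ ε * ‖Complex.exp (f s)‖) (i j : ι) :
    MemLp (fun ω => Y ω i) 2 μ ∧ MemLp (fun ω => Y ω j) 2 μ ∧
      ‖(cov[fun ω => Y ω i, fun ω => Y ω j; μ] : ℂ)
        - fderiv ℂ (fderiv ℂ f) 0 (Pi.single i 1) (Pi.single j 1)‖ ≤ 72 * ε / τ ^ 2 := by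
  have hsingle : ∀ k : ι, ‖(Pi.single k 1 : ι → ℝ)‖ ≤ 1 := fun k => by
    rw [Pi.norm_single, norm_one]
  obtain ⟨hLi, hVi⟩ := norm_variance_dotProduct_sub_le hY hτ one_pos hε hf h (hsingle i)
  obtain ⟨hLj, hVj⟩ := norm_variance_dotProduct_sub_le hY hτ one_pos hε hf h (hsingle j)
  obtain ⟨-, hVij⟩ := norm_variance_dotProduct_sub_le hY hτ two_pos hε hf h
    (w := Pi.single i 1 + Pi.single j 1)
    ((norm_add_le _ _).trans (by linarith [hsingle i, hsingle j]))
  have hsum : (fun ℓ => (((Pi.single i 1 + Pi.single j 1 : ι → ℝ) ℓ : ℂ)))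
      = Pi.single i 1 + Pi.single j 1 := by
    simp only [Pi.add_apply, Complex.ofReal_add]
    rw [← ofReal_comp_single i, ← ofReal_comp_single j]
    rfl
  rw [ofReal_comp_single] at hVi hVj
  rw [hsum] at hVij
  simp only [single_dotProduct, add_dotProduct, one_mul] at hLi hLj hVi hVj hVij
  refine ⟨hLi, hLj, ?_⟩
  have hsymm := (hf 0 (mem_closedBall_self hτ.le)).contDiffAt.isSymmSndFDerivAt_of_omega
    (Pi.single i 1) (Pi.single j 1)
  rw [ofReal_covariance_sub_eq_polarization hLi hLj _ hsymm, norm_div, RCLike.norm_two]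
  calc _ ≤ (24 * ε * 2 ^ 2 / τ ^ 2 + 24 * ε * 1 ^ 2 / τ ^ 2 + 24 * ε * 1 ^ 2 / τ ^ 2) / 2 := by
        gcongr
        exact (norm_sub_le _ _).trans (add_le_add ((norm_sub_le _ _).trans
          (add_le_add hVij hVi)) hVj)
    _ = 72 * ε / τ ^ 2 := by ring

end Multivariate

theorem quasi_power_covariance_general
    {Ω : Type*} [MeasurableSpace Ω] (μ : Measure Ω) [IsProbabilityMeasure μ]
    (m : ℕ)
    (X : ℕ → Ω → Fin m → ℝ)
    (hX : ∀ n, Measurable (X n))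
    (τ : ℝ) (hτ : 0 < τ)
    (u v : (Fin m → ℂ) → ℂ)
    (hu : AnalyticOnNhd ℂ u (Metric.closedBall 0 τ))
    (hv : AnalyticOnNhd ℂ v (Metric.closedBall 0 τ))
    (φ κ : ℕ → ℝ)
    (hκ : Tendsto κ atTop atTop)
    (hmgf : ∃ C : ℝ, 0 < C ∧ ∀ᶠ n in atTop, ∀ s : Fin m → ℂ, ‖s‖ ≤ τ →
      Integrable (fun ω => Complex.exp (∑ ℓ, (X n ω ℓ : ℂ) * s ℓ)) μ ∧
      ‖(∫ ω, Complex.exp (∑ ℓ, (X n ω ℓ : ℂ) * s ℓ) ∂μ)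
          - Complex.exp (u s * (φ n : ℂ) + v s)‖
        ≤ C * ‖Complex.exp (u s * (φ n : ℂ) + v s)‖ / κ n)
    -- `Su` and `Sv` are the Hessians of `u` and `v` at the origin:
    (Su Sv : Matrix (Fin m) (Fin m) ℝ)
    (hSu : ∀ i j, fderiv ℂ (fun z => fderiv ℂ u z (Pi.single j 1)) 0 (Pi.single i 1)
      = (Su i j : ℂ))
    (hSv : ∀ i j, fderiv ℂ (fun z => fderiv ℂ v z (Pi.single j 1)) 0 (Pi.single i 1)
      = (Sv i j : ℂ)) :
    ∃ C : ℝ, ∀ᶠ n in atTop,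
      (∀ i, Integrable (fun ω => X n ω i) μ) ∧
      (∀ i j, Integrable (fun ω => X n ω i * X n ω j) μ) ∧
      ∀ i j,
        |((∫ ω, X n ω i * X n ω j ∂μ) - (∫ ω, X n ω i ∂μ) * (∫ ω, X n ω j ∂μ))
            - (Su i j * φ n + Sv i j)|
          ≤ C / κ n := by
  obtain ⟨C, hC, hev⟩ := hmgf
  refine ⟨72 * C / τ ^ 2, ?_⟩
  filter_upwards [hev, hκ.eventually_ge_atTop (2 * C)] with n hn hκn
  have hκpos : 0 < κ n := by linarith
  have hu0 : ContDiffAt ℂ 2 u 0 := (hu 0 (mem_closedBall_self hτ.le)).contDiffAt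
  have hv0 : ContDiffAt ℂ 2 v 0 := (hv 0 (mem_closedBall_self hτ.le)).contDiffAt
  have hhess : ∀ i j, fderiv ℂ (fderiv ℂ fun s => u s * (φ n : ℂ) + v s) 0
      (Pi.single i 1) (Pi.single j 1) = ((Su i j * φ n + Sv i j : ℝ) : ℂ) := by
    intro i j
    rw [fderiv_fderiv_mul_const_add _ hu0 hv0]
    simp only [FunLike.coe_add, FunLike.coe_smul, Pi.add_apply, Pi.smul_apply, smul_eq_mul]
    rw [← fderiv_apply_fderiv hu0, ← fderiv_apply_fderiv hv0, hSu, hSv]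
    push_cast; ring
  have hcov := norm_covariance_sub_fderiv_fderiv_le (μ := μ) (hX n) hτ (ε := C / κ n)
    (f := fun s => u s * (φ n : ℂ) + v s)
    (by rw [div_le_iff₀ hκpos]; linarith) ((hu.mul analyticOnNhd_const).add hv)
    fun s hs => (hn s hs).2.trans_eq (by ring)
  refine ⟨fun i => (hcov i i).1.integrable one_le_two,
    fun i j => (hcov i j).1.integrable_mul (hcov i j).2.1, fun i j => ?_⟩
  obtain ⟨hLi, hLj, hbound⟩ := hcov i j
  rw [hhess, covariance_eq_sub hLi hLj, ← Complex.ofReal_sub, Complex.norm_real,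
    Real.norm_eq_abs] at hbound
  exact hbound.trans_eq (by ring)

/-- **Variance–covariance matrix under the quasi-power assumption**
(part of Proposition 2 of Heuberger–Kropf).
If the moment generating functions satisfy the quasi-power expression
`exp(u(s)·φₙ + v(s))·(1 + O(κₙ⁻¹))` uniformly on `‖s‖ ≤ τ`, then the
variance–covariance matrix satisfies `Cov(Ωₙ) = H_u(0)·φₙ + H_v(0) + O(κₙ⁻¹)`
entrywise, where `H_u(0)` and `H_v(0)` are the Hessians of `u` and `v` at `0`. -/
theorem quasi_power_covariance
    {Ω : Type*} [MeasurableSpace Ω] (μ : Measure Ω) [IsProbabilityMeasure μ]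
    (m : ℕ) (hm : 1 ≤ m)
    (X : ℕ → Ω → Fin m → ℝ)
    (hX : ∀ n, Measurable (X n))
    (τ : ℝ) (hτ : 0 < τ)
    (u v : (Fin m → ℂ) → ℂ)
    (hu : AnalyticOnNhd ℂ u (Metric.closedBall 0 τ))
    (hv : AnalyticOnNhd ℂ v (Metric.closedBall 0 τ))
    (φ κ : ℕ → ℝ)
    (hφ : Tendsto φ atTop atTop)
    (hκ : Tendsto κ atTop atTop)
    (hmgf : ∃ C : ℝ, 0 < C ∧ ∀ᶠ n in atTop, ∀ s : Fin m → ℂ, ‖s‖ ≤ τ →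
      Integrable (fun ω => Complex.exp (∑ ℓ, (X n ω ℓ : ℂ) * s ℓ)) μ ∧
      ‖(∫ ω, Complex.exp (∑ ℓ, (X n ω ℓ : ℂ) * s ℓ) ∂μ)
          - Complex.exp (u s * (φ n : ℂ) + v s)‖
        ≤ C * ‖Complex.exp (u s * (φ n : ℂ) + v s)‖ / κ n)
    -- `Su` and `Sv` are the Hessians of `u` and `v` at the origin:
    (Su Sv : Matrix (Fin m) (Fin m) ℝ)
    (hSu : ∀ i j, fderiv ℂ (fun z => fderiv ℂ u z (Pi.single j 1)) 0 (Pi.single i 1)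
      = (Su i j : ℂ))
    (hSv : ∀ i j, fderiv ℂ (fun z => fderiv ℂ v z (Pi.single j 1)) 0 (Pi.single i 1)
      = (Sv i j : ℂ)) :
    ∃ C : ℝ, ∀ᶠ n in atTop,
      (∀ i, Integrable (fun ω => X n ω i) μ) ∧
      (∀ i j, Integrable (fun ω => X n ω i * X n ω j) μ) ∧
      ∀ i j,
        |((∫ ω, X n ω i * X n ω j ∂μ) - (∫ ω, X n ω i ∂μ) * (∫ ω, X n ω j ∂μ))
            - (Su i j * φ n + Sv i j)|
          ≤ C / κ n :=
  quasi_power_covariance_general μ m X hX τ hτ u v hu hv φ κ hκ hmgf Su Sv hSu hSv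
end

section
/- Let m ≥ 1 and let X and Y be m-dimensional random vectors with characteristic functions φ_X and φ_Y, and let T > 0. If both E(X) and E(Y) exist (i.e. X and Y are integrable), then the integral ∫_{‖t‖≤T} |(Λ(φ_X)(t) − Λ(φ_Y)(t)) / (t_1 t_2 ⋯ t_m)| dt is finite, where ‖t‖ is the maximum norm on ℝ^m. -/
open MeasureTheory Filter Finset

/-- The finset of all set partitions of `Fin m`, encoded as finsets of nonempty,
pairwise disjoint parts whose union is all of `Fin m`. -/
def setPartitions (m : ℕ) : Finset (Finset (Finset (Fin m))) :=
  Finset.univ.filter fun P =>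
    (∅ : Finset (Fin m)) ∉ P ∧
    (∀ J ∈ P, ∀ K ∈ P, J ≠ K → Disjoint J K) ∧
    P.biUnion id = Finset.univ

/-- Sadikova's operator `Λ` in dimension `m`:
`Λ(h) = ∑_{α ∈ Π_L} (-1)^{|α|-1} (|α|-1)! ∏_{J ∈ α} h ∘ ψ_{J,L}`, where `ψ_{J,L}`
sets all coordinates outside `J` to zero, and the sum is over all set partitions `α`
of `L = {1, …, m}`. -/
noncomputable def sadikovaLambda {m : ℕ} (h : (Fin m → ℝ) → ℂ) (t : Fin m → ℝ) : ℂ :=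
  ∑ P ∈ setPartitions m,
    (-1 : ℂ) ^ (P.card - 1) * (Nat.factorial (P.card - 1) : ℂ) *
      ∏ J ∈ P, h fun k => if k ∈ J then t k else 0

/-- The characteristic function `φ_Z(t) = E(exp(i⟨t, Z⟩))` of a random vector `Z`. -/
noncomputable def charFn {Ω : Type*} [MeasurableSpace Ω] (μ : Measure Ω)
    {m : ℕ} (Z : Ω → Fin m → ℝ) (t : Fin m → ℝ) : ℂ :=
  ∫ ω, Complex.exp (Complex.I * ∑ k, (t k : ℂ) * (Z ω k : ℂ)) ∂μ

/-!
If `t_k = 0`, then `Λ(h)(t)` is the same for every `h` with `h(0) = 1`: for `m ≥ 2` it vanishes,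
because grouping the partitions of `L` by their restriction to `L ∖ {k}`, the `n + 1` ways of
inserting `k` into a partition with `n` blocks contribute `(-1)ⁿ n! + n (-1)ⁿ⁻¹ (n-1)! = 0`.
On the other hand `|φ_Z(s) - φ_Z(s')| ≤ E‖Z‖ ∑ₗ |sₗ - s'ₗ|`, and this Lipschitz bound passes to
`Λ(φ_Z)` because the blocks of a partition are disjoint. Comparing `t` with `t` whose `k`-th
coordinate is set to `0` gives `|Λ(φ_X)(t) - Λ(φ_Y)(t)| ≤ L |t_k|` for every `k`, hence
`≤ L ∏ₖ |t_k|^{1/m}`, so the integrand is dominated by `L ∏ₖ |t_k|^{1/m - 1}`, which is integrable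
on the box `‖t‖ ≤ T` since `1/m - 1 > -1`.
-/

theorem norm_prod_sub_prod_le {ι R : Type*} [NormedCommRing R] [NormOneClass R]
    (s : Finset ι) {a b : ι → R} (ha : ∀ i, ‖a i‖ ≤ 1) (hb : ∀ i, ‖b i‖ ≤ 1) :
    ‖∏ i ∈ s, a i - ∏ i ∈ s, b i‖ ≤ ∑ i ∈ s, ‖a i - b i‖ := by
  classical
  induction s using Finset.induction_on with
  | empty => simp
  | insert i s hi ih =>
    have hprod : ‖∏ j ∈ s, b j‖ ≤ 1 :=
      (norm_prod_le s b).trans (prod_le_one (fun _ _ => norm_nonneg _) fun j _ => hb j)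
    rw [prod_insert hi, prod_insert hi, sum_insert hi,
      show a i * ∏ j ∈ s, a j - b i * ∏ j ∈ s, b j
        = a i * (∏ j ∈ s, a j - ∏ j ∈ s, b j) + (a i - b i) * ∏ j ∈ s, b j by ring]
    refine (norm_add_le_of_le (norm_mul_le _ _) (norm_mul_le _ _)).trans ?_
    nlinarith [ha i, norm_nonneg (a i), norm_nonneg (a i - b i),
      norm_nonneg (∏ j ∈ s, a j - ∏ j ∈ s, b j), norm_nonneg (∏ j ∈ s, b j)]

section SetPartitions

variable {α : Type*} [DecidableEq α] {k : α} {Q : Finset (Finset α)} {J : Finset α}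

/-- Adds `k` to the block `J` of `Q`; for `J = ∅` this adds the new block `{k}`. -/
def insertPart (k : α) (Q : Finset (Finset α)) (J : Finset α) : Finset (Finset α) :=
  insert (insert k J) (Q.erase J)

def erasePart (k : α) (P : Finset (Finset α)) (B : Finset α) : Finset (Finset α) :=
  (insert (B.erase k) (P.erase B)).erase ∅

theorem erase_empty_insert_erase (hQ0 : ∅ ∉ Q) (hJ : J ∈ insert ∅ Q) :
    (insert J (Q.erase J)).erase ∅ = Q := by
  rcases mem_insert.1 hJ with rfl | hJ
  · rw [erase_insert_eq_erase, erase_idem, erase_eq_of_notMem hQ0]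
  · rw [insert_erase hJ, erase_eq_of_notMem hQ0]

theorem notMem_of_mem_insert_empty (hkQ : ∀ K ∈ Q, k ∉ K) (hJ : J ∈ insert ∅ Q) : k ∉ J := by
  rcases mem_insert.1 hJ with rfl | hJ
  exacts [notMem_empty k, hkQ _ hJ]

theorem insert_notMem_erase (hkQ : ∀ K ∈ Q, k ∉ K) (J : Finset α) : insert k J ∉ Q.erase J :=
  fun h => hkQ _ (mem_of_mem_erase h) (mem_insert_self k J)

theorem card_insertPart_empty (hQ0 : ∅ ∉ Q) (hkQ : ∀ K ∈ Q, k ∉ K) :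
    #(insertPart k Q ∅) = #Q + 1 := by
  have h := insert_notMem_erase hkQ ∅
  rw [erase_eq_of_notMem hQ0] at h
  rw [insertPart, erase_eq_of_notMem hQ0, card_insert_of_notMem h]

theorem card_insertPart_of_mem (hkQ : ∀ K ∈ Q, k ∉ K) (hJ : J ∈ Q) :
    #(insertPart k Q J) = #Q := by
  rw [insertPart, card_insert_of_notMem (insert_notMem_erase hkQ J), card_erase_of_mem hJ,
    Nat.sub_add_cancel (card_pos.2 ⟨J, hJ⟩)]

theorem prod_insertPart {M : Type*} [CommMonoid M] {F : Finset α → M}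
    (hF : ∀ J, F (insert k J) = F J) (hF0 : F ∅ = 1) (hQ0 : ∅ ∉ Q) (hkQ : ∀ K ∈ Q, k ∉ K)
    (hJ : J ∈ insert ∅ Q) : ∏ K ∈ insertPart k Q J, F K = ∏ K ∈ Q, F K := by
  rw [insertPart, prod_insert (insert_notMem_erase hkQ J), hF]
  rcases mem_insert.1 hJ with rfl | hJ
  · rw [hF0, one_mul, erase_eq_of_notMem hQ0]
  · exact mul_prod_erase Q F hJ

variable [Fintype α]

def setPartitionsOf (s : Finset α) : Finset (Finset (Finset α)) :=
  univ.filter fun P =>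
    (∅ : Finset α) ∉ P ∧ (∀ J ∈ P, ∀ K ∈ P, J ≠ K → Disjoint J K) ∧ P.biUnion id = s

variable {s : Finset α} {P : Finset (Finset α)}

theorem mem_setPartitionsOf :
    P ∈ setPartitionsOf s ↔
      ∅ ∉ P ∧ (P : Set (Finset α)).PairwiseDisjoint id ∧ P.biUnion id = s := by
  simp only [setPartitionsOf, mem_filter, mem_univ, true_and]
  rfl

theorem notMem_of_mem_setPartitionsOf (hk : k ∉ s) (hP : P ∈ setPartitionsOf s) :
    ∀ K ∈ P, k ∉ K :=
  fun _ hK hkK => hk ((mem_setPartitionsOf.1 hP).2.2 ▸ subset_biUnion_of_mem id hK hkK)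

theorem insertPart_mem_setPartitionsOf (hk : k ∉ s) (hQ : Q ∈ setPartitionsOf s)
    (hJ : J ∈ insert ∅ Q) : insertPart k Q J ∈ setPartitionsOf (insert k s) := by
  obtain ⟨hQ0, hQd, hQu⟩ := mem_setPartitionsOf.1 hQ
  have hJQ : J ∪ (Q.erase J).biUnion id = s := by
    rcases mem_insert.1 hJ with rfl | hJ
    · rw [erase_eq_of_notMem hQ0, empty_union, hQu]
    · rw [← hQu, ← insert_erase hJ, biUnion_insert, erase_insert_eq_erase, erase_idem]; rfl
  refine mem_setPartitionsOf.2 ⟨?_, ?_, ?_⟩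
  · simp only [insertPart, mem_insert, mem_erase, not_or]
    exact ⟨(insert_ne_empty k J).symm, fun h => hQ0 h.2⟩
  · rw [insertPart, coe_insert]
    refine (hQd.subset (coe_subset.2 (erase_subset J Q))).insert fun K hK hne => ?_
    have hK' := mem_of_mem_erase hK
    refine disjoint_insert_left.2 ⟨notMem_of_mem_setPartitionsOf hk hQ K hK', ?_⟩
    rcases mem_insert.1 hJ with rfl | hJ
    · exact disjoint_empty_left K
    · exact hQd hJ hK' (ne_of_mem_erase hK).symm
  · rw [insertPart, biUnion_insert, id, insert_union, hJQ]

theorem eq_of_insertPart_eq (hk : k ∉ s) {Q' : Finset (Finset α)} {J' : Finset α}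
    (hQ : Q ∈ setPartitionsOf s) (hQ' : Q' ∈ setPartitionsOf s)
    (hJ : J ∈ insert ∅ Q) (hJ' : J' ∈ insert ∅ Q')
    (h : insertPart k Q J = insertPart k Q' J') : Q = Q' ∧ J = J' := by
  have hkQ := notMem_of_mem_setPartitionsOf hk hQ
  have hkQ' := notMem_of_mem_setPartitionsOf hk hQ'
  have hblock : insert k J = insert k J' := by
    rcases mem_insert.1 (h ▸ mem_insert_self _ _ : insert k J' ∈ insertPart k Q J) with h' | h'
    · exact h'.symm
    · exact absurd (mem_insert_self k J') (hkQ _ (mem_of_mem_erase h'))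
  obtain rfl : J = J' := by
    rw [← erase_insert (notMem_of_mem_insert_empty hkQ hJ), hblock,
      erase_insert (notMem_of_mem_insert_empty hkQ' hJ')]
  have hrest : Q.erase J = Q'.erase J := by
    rw [← erase_insert (insert_notMem_erase hkQ J), ← erase_insert (insert_notMem_erase hkQ' J)]
    exact congrArg (·.erase (insert k J)) h
  refine ⟨?_, rfl⟩
  rw [← erase_empty_insert_erase (mem_setPartitionsOf.1 hQ).1 hJ,
    ← erase_empty_insert_erase (mem_setPartitionsOf.1 hQ').1 hJ', hrest]

theorem erasePart_mem_setPartitionsOf (hk : k ∉ s)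
    (hP : P ∈ setPartitionsOf (insert k s)) {B : Finset α} (hB : B ∈ P) (hkB : k ∈ B) :
    erasePart k P B ∈ setPartitionsOf s := by
  obtain ⟨-, hPd, hPu⟩ := mem_setPartitionsOf.1 hP
  have hdisjB : ∀ K ∈ P.erase B, Disjoint B K := fun K hK =>
    hPd hB (mem_of_mem_erase hK) (ne_of_mem_erase hK).symm
  have hcover : ∀ x, (∃ K ∈ P, x ∈ K) ↔ x = k ∨ x ∈ s := fun x => by
    rw [← mem_insert, ← hPu, mem_biUnion]; rfl
  refine mem_setPartitionsOf.2 ⟨notMem_erase _ _, ?_, ?_⟩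
  · refine Set.PairwiseDisjoint.subset ?_ (coe_subset.2 (erase_subset _ _))
    rw [coe_insert]
    exact (hPd.subset (coe_subset.2 (erase_subset B P))).insert fun K hK _ =>
      (hdisjB K hK).mono_left (erase_subset k B)
  ext x
  simp only [erasePart, mem_biUnion, mem_erase, mem_insert, id]
  constructor
  · rintro ⟨a, ⟨-, rfl | ⟨haB, ha⟩⟩, hx⟩
    · exact ((hcover x).1 ⟨B, hB, (mem_erase.1 hx).2⟩).resolve_left (mem_erase.1 hx).1
    · exact ((hcover x).1 ⟨a, ha, hx⟩).resolve_left fun hxk =>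
        disjoint_left.1 (hdisjB a (mem_erase.2 ⟨haB, ha⟩)) (hxk ▸ hkB) hx
  · intro hx
    obtain ⟨K, hK, hxK⟩ := (hcover x).2 (Or.inr hx)
    have hxk : x ≠ k := fun h => hk (h ▸ hx)
    by_cases hKB : K = B
    · subst hKB
      exact ⟨K.erase k, ⟨ne_empty_of_mem (mem_erase.2 ⟨hxk, hxK⟩), Or.inl rfl⟩,
        mem_erase.2 ⟨hxk, hxK⟩⟩
    · exact ⟨K, ⟨ne_empty_of_mem hxK, Or.inr ⟨hKB, hK⟩⟩, hxK⟩

theorem exists_insertPart_eq (hk : k ∉ s) (hP : P ∈ setPartitionsOf (insert k s)) :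
    ∃ Q ∈ setPartitionsOf s, ∃ J ∈ insert ∅ Q, insertPart k Q J = P := by
  obtain ⟨hP0, hPd, hPu⟩ := mem_setPartitionsOf.1 hP
  obtain ⟨B, hB, hkB : k ∈ B⟩ := mem_biUnion.1 (hPu ▸ mem_insert_self k s : k ∈ P.biUnion id)
  have hJ : B.erase k ∉ P.erase B := fun h => by
    have hdisj : Disjoint (B.erase k) (B.erase k) :=
      (hPd hB (mem_of_mem_erase h) (ne_of_mem_erase h).symm).mono_left (erase_subset k B)
    exact hP0 (disjoint_self_iff_empty _ |>.1 hdisj ▸ mem_of_mem_erase h)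
  refine ⟨erasePart k P B, erasePart_mem_setPartitionsOf hk hP hB hkB, B.erase k, ?_, ?_⟩
  · by_cases hJ0 : B.erase k = ∅
    · exact hJ0 ▸ mem_insert_self _ _
    · exact mem_insert_of_mem (mem_erase.2 ⟨hJ0, mem_insert_self _ _⟩)
  · rw [insertPart, erasePart, insert_erase hkB, erase_right_comm, erase_insert hJ,
      erase_eq_of_notMem (fun h => hP0 (mem_of_mem_erase h)), insert_erase hB]

theorem sum_setPartitionsOf_insert {M : Type*} [AddCommMonoid M] (hk : k ∉ s)
    (f : Finset (Finset α) → M) :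
    ∑ P ∈ setPartitionsOf (insert k s), f P =
      ∑ Q ∈ setPartitionsOf s, ∑ J ∈ insert ∅ Q, f (insertPart k Q J) := by
  rw [sum_sigma']
  symm
  refine sum_bij (fun x _ => insertPart k x.1 x.2) ?_ ?_ ?_ fun _ _ => rfl
  · rintro ⟨Q, J⟩ hx
    exact insertPart_mem_setPartitionsOf hk (mem_sigma.1 hx).1 (mem_sigma.1 hx).2
  · rintro ⟨Q, J⟩ hx ⟨Q', J'⟩ hx' h
    obtain ⟨rfl, rfl⟩ := eq_of_insertPart_eq hk (mem_sigma.1 hx).1 (mem_sigma.1 hx').1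
      (mem_sigma.1 hx).2 (mem_sigma.1 hx').2 h
    rfl
  · intro P hP
    obtain ⟨Q, hQ, J, hJ, rfl⟩ := exists_insertPart_eq hk hP
    exact ⟨⟨Q, J⟩, mem_sigma.2 ⟨hQ, hJ⟩, rfl⟩

variable {R : Type*} [CommRing R]

def partitionCumulant (F : Finset α → R) : R :=
  ∑ P ∈ setPartitionsOf univ, (-1 : R) ^ (#P - 1) * (Nat.factorial (#P - 1) : R) * ∏ J ∈ P, F J

theorem partitionCumulant_eq_zero [Nontrivial α] {F : Finset α → R} (k : α)
    (hF : ∀ J, F (insert k J) = F J) (hF0 : F ∅ = 1) : partitionCumulant F = 0 := by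
  rw [partitionCumulant, ← insert_erase (mem_univ k),
    sum_setPartitionsOf_insert (notMem_erase k univ)]
  refine sum_eq_zero fun Q hQ => ?_
  have hQ0 := (mem_setPartitionsOf.1 hQ).1
  have hkQ := notMem_of_mem_setPartitionsOf (notMem_erase k univ) hQ
  obtain ⟨n, hn⟩ : ∃ n, #Q = n + 1 := by
    obtain ⟨l, hl⟩ := exists_ne k
    have hl' : l ∈ Q.biUnion id := (mem_setPartitionsOf.1 hQ).2.2 ▸ mem_erase.2 ⟨hl, mem_univ l⟩
    obtain ⟨J, hJ, -⟩ := mem_biUnion.1 hl'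
    exact ⟨#Q - 1, (Nat.sub_add_cancel (card_pos.2 ⟨J, hJ⟩)).symm⟩
  rw [sum_insert hQ0, prod_insertPart hF hF0 hQ0 hkQ (mem_insert_self _ _),
    card_insertPart_empty hQ0 hkQ, sum_congr rfl fun J hJ => by
      rw [prod_insertPart hF hF0 hQ0 hkQ (mem_insert_of_mem hJ), card_insertPart_of_mem hkQ hJ],
    sum_const, hn]
  simp only [Nat.add_sub_cancel, nsmul_eq_mul, Nat.factorial_succ]
  push_cast
  ring

variable (α) in
def partitionWeight : ℝ := ∑ P ∈ setPartitionsOf (univ : Finset α), (Nat.factorial (#P - 1) : ℝ)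

theorem partitionWeight_nonneg : 0 ≤ partitionWeight α :=
  sum_nonneg fun _ _ => Nat.cast_nonneg _

theorem norm_partitionCumulant_sub_le {R : Type*} [NormedCommRing R] [NormOneClass R]
    {F G : Finset α → R} {w : α → ℝ} (hF : ∀ J, ‖F J‖ ≤ 1) (hG : ∀ J, ‖G J‖ ≤ 1)
    (hFG : ∀ J, ‖F J - G J‖ ≤ ∑ l ∈ J, w l) :
    ‖partitionCumulant F - partitionCumulant G‖ ≤ partitionWeight α * ∑ l, w l := by
  rw [partitionCumulant, partitionCumulant, ← sum_sub_distrib, partitionWeight, sum_mul]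
  refine (norm_sum_le _ _).trans (sum_le_sum fun P hP => ?_)
  obtain ⟨-, hPd, hPu⟩ := mem_setPartitionsOf.1 hP
  have hcoeff : ‖(-1 : R) ^ (#P - 1) * (Nat.factorial (#P - 1) : R)‖ ≤ Nat.factorial (#P - 1) :=
    calc _ ≤ ‖(-1 : R)‖ ^ (#P - 1) * ‖(Nat.factorial (#P - 1) : R)‖ :=
          (norm_mul_le _ _).trans (mul_le_mul_of_nonneg_right (norm_pow_le _ _) (norm_nonneg _))
      _ ≤ _ := by simpa using Nat.norm_cast_le (α := R) (Nat.factorial (#P - 1))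
  have hprod : ‖∏ J ∈ P, F J - ∏ J ∈ P, G J‖ ≤ ∑ l, w l :=
    calc _ ≤ ∑ J ∈ P, ‖F J - G J‖ := norm_prod_sub_prod_le P hF hG
      _ ≤ ∑ J ∈ P, ∑ l ∈ J, w l := sum_le_sum fun J _ => hFG J
      _ = ∑ l, w l := by rw [← hPu, sum_biUnion hPd]; rfl
  rw [← mul_sub]
  exact (norm_mul_le _ _).trans (mul_le_mul hcoeff hprod (norm_nonneg _) (Nat.cast_nonneg _))

end SetPartitions

theorem norm_exp_I_mul_sub_exp_I_mul_le (a b : ℝ) :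
    ‖Complex.exp (Complex.I * a) - Complex.exp (Complex.I * b)‖ ≤ |a - b| := by
  have h : Complex.exp (Complex.I * a) - Complex.exp (Complex.I * b)
      = Complex.exp (Complex.I * b) * (Complex.exp (Complex.I * ↑(a - b)) - 1) := by
    rw [mul_sub, ← Complex.exp_add]; push_cast; ring_nf
  rw [h, norm_mul, Complex.norm_exp_I_mul_ofReal, one_mul]
  exact Real.norm_exp_I_mul_ofReal_sub_one_le

section CharFn

variable {Ω : Type*} [MeasurableSpace Ω] {μ : Measure Ω} [IsProbabilityMeasure μ]
  {m : ℕ} {Z : Ω → Fin m → ℝ}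

theorem charFn_eq (μ : Measure Ω) (Z : Ω → Fin m → ℝ) (t : Fin m → ℝ) :
    charFn μ Z t = ∫ ω, Complex.exp (Complex.I * ↑(∑ k, t k * Z ω k)) ∂μ := by
  simp [charFn]

theorem charFn_zero (Z : Ω → Fin m → ℝ) : charFn μ Z 0 = 1 := by
  simp [charFn]

theorem norm_charFn_le_one (Z : Ω → Fin m → ℝ) (t : Fin m → ℝ) : ‖charFn μ Z t‖ ≤ 1 := by
  rw [charFn_eq]
  refine (norm_integral_le_of_norm_le_const (C := 1) (ae_of_all _ fun ω => ?_)).trans (by simp)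
  rw [Complex.norm_exp_I_mul_ofReal]

theorem norm_charFn_sub_le (hZ : Integrable Z μ) (s s' : Fin m → ℝ) :
    ‖charFn μ Z s - charFn μ Z s'‖ ≤ (∑ l, |s l - s' l|) * ∫ ω, ‖Z ω‖ ∂μ := by
  have hint : ∀ t : Fin m → ℝ,
      Integrable (fun ω => Complex.exp (Complex.I * ↑(∑ k, t k * Z ω k))) μ := fun t =>
    .of_bound ((by fun_prop : Continuous fun z : Fin m → ℝ =>
      Complex.exp (Complex.I * ↑(∑ k, t k * z k))).comp_aestronglyMeasurable
        hZ.aestronglyMeasurable) 1 (ae_of_all _ fun ω => (Complex.norm_exp_I_mul_ofReal _).le)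
  rw [charFn_eq, charFn_eq, ← integral_sub (hint s) (hint s'), ← integral_const_mul]
  refine norm_integral_le_of_norm_le (hZ.norm.const_mul _) (ae_of_all _ fun ω => ?_)
  refine (norm_exp_I_mul_sub_exp_I_mul_le _ _).trans ?_
  rw [← sum_sub_distrib, sum_mul]
  refine (abs_sum_le_sum_abs _ _).trans (sum_le_sum fun l _ => ?_)
  rw [← sub_mul, abs_mul]
  exact mul_le_mul_of_nonneg_left (norm_le_pi_norm (Z ω) l) (abs_nonneg _)

end CharFn

section Sadikova

variable {m : ℕ}

theorem sadikovaLambda_eq_partitionCumulant (h : (Fin m → ℝ) → ℂ) (t : Fin m → ℝ) :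
    sadikovaLambda h t = partitionCumulant fun J => h fun k => if k ∈ J then t k else 0 :=
  rfl

theorem sadikovaLambda_eq_of_apply_eq_zero {h h' : (Fin m → ℝ) → ℂ} (h0 : h 0 = 1)
    (h0' : h' 0 = 1) {t : Fin m → ℝ} {k : Fin m} (ht : t k = 0) :
    sadikovaLambda h t = sadikovaLambda h' t := by
  rcases subsingleton_or_nontrivial (Fin m) with hsub | hnontriv
  · have ht0 : t = 0 := funext fun l => Subsingleton.elim k l ▸ ht
    subst ht0
    simp only [sadikovaLambda_eq_partitionCumulant, Pi.zero_apply, ite_self]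
    change partitionCumulant (fun _ => h 0) = partitionCumulant (fun _ => h' 0)
    rw [h0, h0']
  · have hvanish (g : (Fin m → ℝ) → ℂ) (hg : g 0 = 1) : sadikovaLambda g t = 0 := by
      refine partitionCumulant_eq_zero k (fun J => ?_) (by simpa only [notMem_empty, if_false])
      congr 1
      funext l
      by_cases hl : l = k <;> simp [hl, ht]
    rw [hvanish h h0, hvanish h' h0']

variable {Ω : Type*} [MeasurableSpace Ω] {μ : Measure Ω} [IsProbabilityMeasure μ]
  {Z : Ω → Fin m → ℝ}

theorem norm_sadikovaLambda_charFn_sub_le (hZ : Integrable Z μ) (t t' : Fin m → ℝ) :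
    ‖sadikovaLambda (charFn μ Z) t - sadikovaLambda (charFn μ Z) t'‖
      ≤ partitionWeight (Fin m) * ((∑ l, |t l - t' l|) * ∫ ω, ‖Z ω‖ ∂μ) := by
  rw [sadikovaLambda_eq_partitionCumulant, sadikovaLambda_eq_partitionCumulant, sum_mul]
  refine norm_partitionCumulant_sub_le (fun _ => norm_charFn_le_one Z _)
    (fun _ => norm_charFn_le_one Z _) fun J => (norm_charFn_sub_le hZ _ _).trans_eq ?_
  rw [← sum_mul]
  congr 1
  rw [← univ_inter J, ← sum_ite_mem]
  exact sum_congr rfl fun l _ => by split_ifs <;> simp_all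

theorem norm_sadikovaLambda_charFn_sub_le_mul_abs {Ω' : Type*} [MeasurableSpace Ω']
    {ν : Measure Ω'} [IsProbabilityMeasure ν] {X : Ω → Fin m → ℝ} {Y : Ω' → Fin m → ℝ}
    (hX : Integrable X μ) (hY : Integrable Y ν) (t : Fin m → ℝ) (k : Fin m) :
    ‖sadikovaLambda (charFn μ X) t - sadikovaLambda (charFn ν Y) t‖
      ≤ partitionWeight (Fin m) * (∫ ω, ‖X ω‖ ∂μ + ∫ ω, ‖Y ω‖ ∂ν) * |t k| := by
  set t' := Function.update t k 0
  have hdist : ∑ l, |t l - t' l| = |t k| := by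
    rw [sum_eq_single k (fun l _ hl => by simp [t', Function.update_of_ne hl]) (by simp)]
    simp [t']
  have hzero : sadikovaLambda (charFn μ X) t' = sadikovaLambda (charFn ν Y) t' :=
    sadikovaLambda_eq_of_apply_eq_zero (charFn_zero X) (charFn_zero Y)
      (Function.update_self k 0 t)
  calc _ = ‖(sadikovaLambda (charFn μ X) t - sadikovaLambda (charFn μ X) t')
        - (sadikovaLambda (charFn ν Y) t - sadikovaLambda (charFn ν Y) t')‖ := by
          rw [hzero, sub_sub_sub_cancel_right]
    _ ≤ _ := norm_sub_le_of_le (norm_sadikovaLambda_charFn_sub_le hX t t')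
          (norm_sadikovaLambda_charFn_sub_le hY t t')
    _ = _ := by rw [hdist]; ring

end Sadikova

theorem le_mul_prod_rpow_of_le_mul {ι : Type*} [Fintype ι] [Nonempty ι] {a c : ℝ} {b : ι → ℝ}
    (ha : 0 ≤ a) (hc : 0 ≤ c) (hb : ∀ i, 0 ≤ b i) (h : ∀ i, a ≤ c * b i) :
    a ≤ c * ∏ i, b i ^ (Fintype.card ι : ℝ)⁻¹ := by
  have hprod_const : ∀ x : ℝ, 0 ≤ x → ∏ _i : ι, x ^ (Fintype.card ι : ℝ)⁻¹ = x := fun x hx => by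
    rw [prod_const, card_univ, ← Real.rpow_natCast, ← Real.rpow_mul hx,
      inv_mul_cancel₀ (by exact_mod_cast Fintype.card_ne_zero), Real.rpow_one]
  calc a = ∏ _i : ι, a ^ (Fintype.card ι : ℝ)⁻¹ := (hprod_const a ha).symm
    _ ≤ ∏ i, (c * b i) ^ (Fintype.card ι : ℝ)⁻¹ :=
      prod_le_prod (fun _ _ => by positivity) fun i _ => by gcongr; exact h i
    _ = c * ∏ i, b i ^ (Fintype.card ι : ℝ)⁻¹ := by
      simp_rw [Real.mul_rpow hc (hb _)]
      rw [prod_mul_distrib, hprod_const c hc]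

theorem norm_div_prod_le_mul_prod_rpow {ι : Type*} [Fintype ι] [Nonempty ι] {z : ℂ} {c : ℝ}
    {t : ι → ℝ} (hc : 0 ≤ c) (h : ∀ i, ‖z‖ ≤ c * |t i|) :
    ‖z / ∏ i, (t i : ℂ)‖ ≤ c * ∏ i, |t i| ^ ((Fintype.card ι : ℝ)⁻¹ - 1) := by
  by_cases ht : ∃ i, t i = 0
  · obtain ⟨i, hi⟩ := ht
    rw [prod_eq_zero (mem_univ i) (by simp [hi]), div_zero, norm_zero]
    positivity
  simp only [not_exists] at ht
  have hpos : ∀ i, 0 < |t i| := fun i => abs_pos.2 (ht i)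
  simp_rw [Real.rpow_sub_one (hpos _).ne', prod_div_distrib, norm_div, norm_prod,
    Complex.norm_real, Real.norm_eq_abs, ← mul_div_assoc]
  exact div_le_div_of_nonneg_right
    (le_mul_prod_rpow_of_le_mul (norm_nonneg z) hc (fun i => abs_nonneg _) h)
    (prod_nonneg fun i _ => abs_nonneg _)

theorem intervalIntegrable_abs_rpow {r : ℝ} (hr : -1 < r) (a b : ℝ) :
    IntervalIntegrable (fun x => |x| ^ r) volume a b := by
  have hnonneg : ∀ c, 0 ≤ c → IntervalIntegrable (fun x => |x| ^ r) volume 0 c := fun c hc =>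
    (intervalIntegral.intervalIntegrable_rpow' hr).congr fun x hx => by
      rw [Set.uIoc_of_le hc] at hx
      simp only [abs_of_pos hx.1]
  have hzero : ∀ c, IntervalIntegrable (fun x => |x| ^ r) volume 0 c := fun c => by
    rcases le_total 0 c with hc | hc
    · exact hnonneg c hc
    · rw [IntervalIntegrable.iff_comp_neg, neg_zero]
      simpa only [abs_neg] using hnonneg (-c) (neg_nonneg.2 hc)
  exact (hzero a).symm.trans (hzero b)

theorem integrableOn_pi_prod {ι E 𝕜 : Type*} [Fintype ι] [MeasurableSpace E] [RCLike 𝕜]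
    {μ : Measure E} [SigmaFinite μ] {f : E → 𝕜} {s : Set E} (hf : IntegrableOn f s μ) :
    IntegrableOn (fun x : ι → E => ∏ i, f (x i)) (Set.pi Set.univ fun _ => s)
      (Measure.pi fun _ => μ) := by
  rw [IntegrableOn, Measure.restrict_pi_pi]
  exact Integrable.fintype_prod fun _ => hf

theorem berry_esseen_integral_finite_general
    {Ω₁ Ω₂ : Type*} [MeasurableSpace Ω₁] [MeasurableSpace Ω₂]
    (μ : Measure Ω₁) [IsProbabilityMeasure μ]
    (ν : Measure Ω₂) [IsProbabilityMeasure ν]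
    (m : ℕ) (hm : 1 ≤ m)
    (X : Ω₁ → Fin m → ℝ) (Y : Ω₂ → Fin m → ℝ)
    (hXint : Integrable X μ) (hYint : Integrable Y ν)
    (T : ℝ) :
    (∫⁻ t in {t : Fin m → ℝ | ‖t‖ ≤ T},
        (‖(sadikovaLambda (charFn μ X) t - sadikovaLambda (charFn ν Y) t)
            / (∏ ℓ, (t ℓ : ℂ))‖₊ : ENNReal)) < ⊤ := by
  have : Nonempty (Fin m) := ⟨⟨0, hm⟩⟩
  set L := partitionWeight (Fin m) * (∫ ω, ‖X ω‖ ∂μ + ∫ ω, ‖Y ω‖ ∂ν)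
  set r := (m : ℝ)⁻¹ - 1
  have hr : -1 < r := by
    have : (0 : ℝ) < (m : ℝ)⁻¹ := inv_pos.2 (by exact_mod_cast hm)
    linarith
  have hL : 0 ≤ L := mul_nonneg partitionWeight_nonneg
    (add_nonneg (integral_nonneg fun _ => norm_nonneg _) (integral_nonneg fun _ => norm_nonneg _))
  have hbound (t : Fin m → ℝ) :
      ‖(sadikovaLambda (charFn μ X) t - sadikovaLambda (charFn ν Y) t) / ∏ ℓ, (t ℓ : ℂ)‖
        ≤ L * ∏ k, |t k| ^ r := by
    simpa only [Fintype.card_fin] using norm_div_prod_le_mul_prod_rpow hL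
      (norm_sadikovaLambda_charFn_sub_le_mul_abs hXint hYint t)
  have hbox : {t : Fin m → ℝ | ‖t‖ ≤ T} ⊆ Set.pi Set.univ fun _ => Set.Icc (-T) T :=
    fun t ht k _ => abs_le.1 ((norm_le_pi_norm t k).trans ht)
  have hint1 : IntegrableOn (fun x => |x| ^ r) (Set.Icc (-T) T) :=
    ((intervalIntegrable_iff' (a := -T) (b := T)).1
      (intervalIntegrable_abs_rpow hr (-T) T)).mono_set Set.Icc_subset_uIcc
  have hint : IntegrableOn (fun t : Fin m → ℝ => L * ∏ k, |t k| ^ r) {t | ‖t‖ ≤ T} :=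
    ((integrableOn_pi_prod hint1).mono_set hbox).const_mul L
  refine lt_of_le_of_lt (lintegral_mono fun t => ?_) hint.2
  exact enorm_le_iff_norm_le.2 ((hbound t).trans (Real.le_norm_self _))

/-- **Finiteness of the integral in the `m`-dimensional Berry–Esseen inequality**
(last assertion of Theorem 4 of Heuberger–Kropf): if both `E(X)` and `E(Y)` exist,
i.e. `X` and `Y` are integrable, then for every `T > 0` the integral
`∫_{‖t‖ ≤ T} |(Λ(φ_X)(t) - Λ(φ_Y)(t)) / (t₁⋯t_m)| dt` is finite. -/
theorem berry_esseen_integral_finite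
    {Ω₁ Ω₂ : Type*} [MeasurableSpace Ω₁] [MeasurableSpace Ω₂]
    (μ : Measure Ω₁) [IsProbabilityMeasure μ]
    (ν : Measure Ω₂) [IsProbabilityMeasure ν]
    (m : ℕ) (hm : 1 ≤ m)
    (X : Ω₁ → Fin m → ℝ) (Y : Ω₂ → Fin m → ℝ)
    (hX : Measurable X) (hY : Measurable Y)
    (hXint : Integrable X μ) (hYint : Integrable Y ν)
    (T : ℝ) (hT : 0 < T) :
    (∫⁻ t in {t : Fin m → ℝ | ‖t‖ ≤ T},
        (‖(sadikovaLambda (charFn μ X) t - sadikovaLambda (charFn ν Y) t)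
            / (∏ ℓ, (t ℓ : ℂ))‖₊ : ENNReal)) < ⊤ :=
  berry_esseen_integral_finite_general μ ν m hm X Y hXint hYint T
end
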